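/- Let X, Y ∈ ℝ^{2n×2n} with Y symmetric, I − X X^T ≥ 0, [X, σ_{2n}] = 0, ker(Y) = ker(I − X X^T), and Y ≥ i σ_{2n} − i X σ_{2n} X^T (as complex Hermitian matrices). Set s₂ := (I − X X^T)^{1/2} and γ_E := s₂^+ Y (s₂^+)^T + P, where s₂^+ is the Moore–Penrose pseudoinverse and P the orthogonal projection onto ker(s₂). Then s₂ s₂^T = I − X X^T, s₂ σ_{2n} s₂^T = σ_{2n} − X σ_{2n} X^T, s₂ γ_E s₂^T = Y, and γ_E ≥ i σ_{2n}. -/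

import Mathlib

open Matrix ComplexOrder

/-- The standard symplectic form `σ_{2k} = [[0, I_k], [-I_k, 0]]`. -/
def symJ (k : ℕ) : Matrix (Fin k ⊕ Fin k) (Fin k ⊕ Fin k) ℝ :=
  Matrix.fromBlocks 0 1 (-1) 0

/-- The positive semidefinite square root of a positive semidefinite matrix (the definition
`Matrix.PosSemidef.sqrt` of the older Mathlib, since removed). -/
noncomputable def Matrix.PosSemidef.sqrt {m 𝕜 : Type*} [Fintype m] [DecidableEq m] [RCLike 𝕜]
    {A : Matrix m m 𝕜} (hA : A.PosSemidef) : Matrix m m 𝕜 :=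
  hA.1.eigenvectorUnitary.1 * diagonal ((↑) ∘ (√·) ∘ hA.1.eigenvalues) *
  (star hA.1.eigenvectorUnitary : Matrix m m 𝕜)

/-!
Since `X` commutes with `σ` and `σᵀ = -σ`, the symplectic form `σ` commutes with `1 - X Xᵀ`,
hence with its square root `s₂` and, by uniqueness of the Moore–Penrose inverse, with
`p = s₂⁺`, which is symmetric and commutes with `s₂`. As `Y` vanishes on
`ker s₂ = ker (1 - X Xᵀ)`, the projection `Q = p s₂` onto the range of `s₂` satisfies
`Q Y = Y Q = Y`, and the three identities are algebra. For the positivity,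
`γ_E - iσ = p (Y - i s₂ σ s₂) p + (1 - Q) (1 - iσ) (1 - Q)`
is a sum of congruences of positive semidefinite matrices: `1 - iσ ≥ 0` because `iσ` is a
Hermitian involution.
-/

theorem Matrix.mul_eq_zero_of_ker_le_ker {l k m p R : Type*} [Fintype m] [Fintype p]
    [DecidableEq p] [CommRing R] {A : Matrix l m R} {B : Matrix k m R} {C : Matrix m p R}
    (hAB : LinearMap.ker A.mulVecLin ≤ LinearMap.ker B.mulVecLin) (hAC : A * C = 0) :
    B * C = 0 := by
  have hC : LinearMap.range C.mulVecLin ≤ LinearMap.ker A.mulVecLin :=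
    LinearMap.range_le_ker_iff.mpr (by rw [← Matrix.mulVecLin_mul, hAC, Matrix.mulVecLin_zero])
  apply Matrix.toLin'.injective
  rw [Matrix.toLin'_apply', Matrix.mulVecLin_mul, map_zero]
  exact LinearMap.range_le_ker_iff.mp (hC.trans hAB)

namespace Matrix

structure IsMoorePenroseInverse {m n R : Type*} [Fintype m] [Fintype n] [CommSemiring R]
    (A : Matrix m n R) (P : Matrix n m R) : Prop where
  mul_inv_mul : A * P * A = A
  inv_mul_inv : P * A * P = P
  transpose_mul_inv : (A * P)ᵀ = A * P
  transpose_inv_mul : (P * A)ᵀ = P * A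

namespace IsMoorePenroseInverse

variable {m n R : Type*} [Fintype m] [Fintype n]

section CommSemiring

variable [CommSemiring R] {A : Matrix m n R} {P Q : Matrix n m R}

theorem unique (hP : A.IsMoorePenroseInverse P) (hQ : A.IsMoorePenroseInverse Q) : P = Q := by
  have hAP : A * P = A * Q :=
    calc A * P = (A * Q * A * P)ᵀ := by rw [hQ.mul_inv_mul, hP.transpose_mul_inv]
      _ = (A * P)ᵀ * (A * Q)ᵀ := by rw [Matrix.mul_assoc (A * Q), Matrix.transpose_mul]
      _ = A * Q := by
        rw [hP.transpose_mul_inv, hQ.transpose_mul_inv, ← Matrix.mul_assoc, hP.mul_inv_mul]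
  have hPA : P * A = Q * A :=
    calc P * A = (P * A * Q * A)ᵀ := by
          rw [Matrix.mul_assoc P A Q, Matrix.mul_assoc P, hQ.mul_inv_mul, hP.transpose_inv_mul]
      _ = (Q * A)ᵀ * (P * A)ᵀ := by rw [Matrix.mul_assoc (P * A), Matrix.transpose_mul]
      _ = Q * A := by
        rw [hP.transpose_inv_mul, hQ.transpose_inv_mul, Matrix.mul_assoc, ← Matrix.mul_assoc A,
          hP.mul_inv_mul]
  calc P = P * A * P := hP.inv_mul_inv.symm
    _ = Q * A * Q := by rw [Matrix.mul_assoc, hAP, ← Matrix.mul_assoc, hPA]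
    _ = Q := hQ.inv_mul_inv

theorem transpose (hP : A.IsMoorePenroseInverse P) : Aᵀ.IsMoorePenroseInverse Pᵀ where
  mul_inv_mul := by
    simpa only [Matrix.transpose_mul, Matrix.mul_assoc]
      using congrArg Matrix.transpose hP.mul_inv_mul
  inv_mul_inv := by
    simpa only [Matrix.transpose_mul, Matrix.mul_assoc]
      using congrArg Matrix.transpose hP.inv_mul_inv
  transpose_mul_inv := by
    rw [← Matrix.transpose_mul, Matrix.transpose_transpose, hP.transpose_inv_mul]
  transpose_inv_mul := by
    rw [← Matrix.transpose_mul, Matrix.transpose_transpose, hP.transpose_mul_inv]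

theorem conj [DecidableEq m] [DecidableEq n] {U : Matrix m m R} {V : Matrix n n R}
    (hP : A.IsMoorePenroseInverse P) (hU : Uᵀ * U = 1) (hV : Vᵀ * V = 1) :
    (U * A * Vᵀ).IsMoorePenroseInverse (V * P * Uᵀ) := by
  have hU' (B : Matrix m n R) : Uᵀ * (U * B) = B := by
    rw [← Matrix.mul_assoc, hU, Matrix.one_mul]
  have hV' (B : Matrix n m R) : Vᵀ * (V * B) = B := by
    rw [← Matrix.mul_assoc, hV, Matrix.one_mul]
  refine ⟨?_, ?_, ?_, ?_⟩
  · simpa only [Matrix.mul_assoc, hU', hV'] using congrArg (U * · * Vᵀ) hP.mul_inv_mul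
  · simpa only [Matrix.mul_assoc, hU', hV'] using congrArg (V * · * Uᵀ) hP.inv_mul_inv
  · simpa only [Matrix.transpose_mul, Matrix.transpose_transpose, Matrix.mul_assoc, hV']
      using congrArg (U * · * Uᵀ) hP.transpose_mul_inv
  · simpa only [Matrix.transpose_mul, Matrix.transpose_transpose, Matrix.mul_assoc, hU']
      using congrArg (V * · * Vᵀ) hP.transpose_inv_mul

end CommSemiring

variable {A P : Matrix m m R}

theorem transpose_eq_self [CommSemiring R] (hP : A.IsMoorePenroseInverse P) (hA : Aᵀ = A) :
    Pᵀ = P :=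
  (hA ▸ hP.transpose).unique hP

theorem commute_of_transpose_eq_self [CommSemiring R] (hP : A.IsMoorePenroseInverse P)
    (hA : Aᵀ = A) : Commute A P := by
  have hPt := hP.transpose_eq_self hA
  calc A * P = (A * P)ᵀ := hP.transpose_mul_inv.symm
    _ = P * A := by rw [Matrix.transpose_mul, hA, hPt]

theorem mul_one_sub_inv_mul [CommRing R] [DecidableEq m] (hP : A.IsMoorePenroseInverse P) :
    A * (1 - P * A) = 0 := by
  rw [Matrix.mul_sub, Matrix.mul_one, ← Matrix.mul_assoc, hP.mul_inv_mul, sub_self]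

theorem mul_inv_mul_of_ker_le [CommRing R] [DecidableEq m] {l : Type*} {B : Matrix l m R}
    (hP : A.IsMoorePenroseInverse P)
    (hB : LinearMap.ker A.mulVecLin ≤ LinearMap.ker B.mulVecLin) : B * (P * A) = B := by
  have h := mul_eq_zero_of_ker_le_ker hB hP.mul_one_sub_inv_mul
  rwa [Matrix.mul_sub, Matrix.mul_one, sub_eq_zero, eq_comm] at h

theorem commute_of_commute [CommRing R] [DecidableEq m] {U : Matrix m m R}
    (hP : A.IsMoorePenroseInverse P) (hU : Uᵀ * U = 1) (hUA : Commute U A) : Commute U P := by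
  have hU' : U * Uᵀ = 1 := mul_eq_one_comm.mp hU
  have hA : U * A * Uᵀ = A := by rw [hUA.eq, Matrix.mul_assoc, hU', Matrix.mul_one]
  have hUP : U * P * Uᵀ = P := (hA ▸ hP.conj hU hU).unique hP
  calc U * P = U * P * Uᵀ * U := by rw [Matrix.mul_assoc _ Uᵀ, hU, Matrix.mul_one]
    _ = P * U := by rw [hUP]

end IsMoorePenroseInverse

end Matrix

namespace Matrix.PosSemidef

open scoped MatrixOrder

variable {m 𝕜 : Type*} [Fintype m] [DecidableEq m] [RCLike 𝕜] {A : Matrix m m 𝕜}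

theorem sqrt_eq_cfcSqrt (hA : A.PosSemidef) : hA.sqrt = CFC.sqrt A := by
  rw [CFC.sqrt_eq_cfc, cfc_nnreal_eq_real _ A, hA.1.cfc_eq]
  simp only [IsHermitian.cfc, Unitary.conjStarAlgAut_apply, Matrix.PosSemidef.sqrt]
  congr 3
  funext i
  simp [max_eq_left (hA.eigenvalues_nonneg i)]

theorem isHermitian_sqrt (hA : A.PosSemidef) : hA.sqrt.IsHermitian := by
  rw [hA.sqrt_eq_cfcSqrt]; exact (CFC.sqrt_nonneg A).posSemidef.1

theorem sqrt_mul_self (hA : A.PosSemidef) : hA.sqrt * hA.sqrt = A := by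
  rw [hA.sqrt_eq_cfcSqrt]; exact CFC.sqrt_mul_sqrt_self A hA.nonneg

theorem transpose_sqrt {A : Matrix m m ℝ} (hA : A.PosSemidef) : hA.sqrtᵀ = hA.sqrt := by
  rw [← conjTranspose_eq_transpose_of_trivial]; exact hA.isHermitian_sqrt

theorem commute_sqrt {B : Matrix m m 𝕜} (hA : A.PosSemidef) (hAB : Commute A B) :
    Commute hA.sqrt B := by
  rw [hA.sqrt_eq_cfcSqrt, CFC.sqrt_eq_cfc]; exact hAB.cfc_nnreal _

end Matrix.PosSemidef

theorem symJ_transpose (k : ℕ) : (symJ k)ᵀ = -symJ k := by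
  simp [symJ, Matrix.fromBlocks_transpose, Matrix.fromBlocks_neg]

theorem symJ_mul_self (k : ℕ) : symJ k * symJ k = -1 := by
  simp [symJ, Matrix.fromBlocks_multiply, ← Matrix.fromBlocks_one, Matrix.fromBlocks_neg]

theorem symJ_transpose_mul_self (k : ℕ) : (symJ k)ᵀ * symJ k = 1 := by
  rw [symJ_transpose, Matrix.neg_mul, symJ_mul_self, neg_neg]

theorem commute_symJ_one_sub_mul_transpose {k : ℕ}
    {X : Matrix (Fin k ⊕ Fin k) (Fin k ⊕ Fin k) ℝ} (hX : Commute (symJ k) X) :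
    Commute (symJ k) (1 - X * Xᵀ) := by
  have hXt : Commute (symJ k) Xᵀ := by
    have h := congrArg Matrix.transpose hX.eq
    simp only [Matrix.transpose_mul, symJ_transpose, Matrix.neg_mul, Matrix.mul_neg, neg_inj] at h
    exact h.symm
  exact (Commute.one_right _).sub_right (hX.mul_right hXt)

theorem Matrix.posSemidef_mul_mul_add_one_sub_mul_sub {m R : Type*} [Fintype m] [DecidableEq m]
    [Ring R] [PartialOrder R] [StarRing R] [AddLeftMono R] {P S Y K : Matrix m m R}
    (hP : Pᴴ = P) (hPS : (P * S)ᴴ = P * S) (hPSP : P * S * P = P) (hSP : Commute S P)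
    (hKP : Commute K P) (hKS : Commute K S)
    (hY : (Y - S * K * S).PosSemidef) (hK : (1 - K).PosSemidef) :
    (P * Y * P + (1 - P * S) - K).PosSemidef := by
  set Q := P * S with hQ
  have hQQ : IsIdempotentElem Q := by
    rw [IsIdempotentElem, hQ, ← Matrix.mul_assoc, hPSP]
  have hKQ : Commute K Q := hKP.mul_right hKS
  have hK1Q : Commute K (1 - Q) := (Commute.one_right K).sub_right hKQ
  have h₁ : P * (Y - S * K * S) * Pᴴ = P * Y * P - K * Q := by
    have : P * (S * K * S) * P = K * Q :=
      calc P * (S * K * S) * P = Q * K * (S * P) := by simp only [hQ, Matrix.mul_assoc]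
        _ = K * Q := by rw [hSP.eq, ← hKQ.eq, Matrix.mul_assoc, hQQ.eq]
    rw [hP, Matrix.mul_sub, Matrix.sub_mul, this]
  have h₂ : (1 - Q) * (1 - K) * (1 - Q)ᴴ = (1 - Q) - K * (1 - Q) := by
    rw [Matrix.conjTranspose_sub, Matrix.conjTranspose_one, hPS]
    calc (1 - Q) * (1 - K) * (1 - Q) = (1 - Q) * (1 - Q) - (1 - Q) * K * (1 - Q) := by
          noncomm_ring
      _ = (1 - Q) - K * (1 - Q) := by
          rw [← hK1Q.eq, Matrix.mul_assoc, hQQ.one_sub.eq]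
  have h := (h₁ ▸ hY.mul_mul_conjTranspose_same P).add
    (h₂ ▸ hK.mul_mul_conjTranspose_same (1 - Q))
  convert h using 1
  noncomm_ring

theorem Matrix.posSemidef_one_sub_of_mul_self_eq_one {m : Type*} [Fintype m] [DecidableEq m]
    {K : Matrix m m ℂ} (hK : Kᴴ = K) (hKK : K * K = 1) : (1 - K).PosSemidef := by
  have h : (1 - K) * (1 - K)ᴴ = (2 : ℝ) • (1 - K) :=
    calc (1 - K) * (1 - K)ᴴ = 1 - 2 • K + K * K := by
          rw [Matrix.conjTranspose_sub, Matrix.conjTranspose_one, hK]; noncomm_ring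
      _ = (2 : ℝ) • (1 - K) := by rw [hKK, smul_sub, two_smul, two_smul, two_smul]; abel
  have := (Matrix.posSemidef_self_mul_conjTranspose (1 - K)).smul (a := (1 / 2 : ℝ)) (by norm_num)
  rwa [h, smul_smul, one_div, inv_mul_cancel₀ two_ne_zero, one_smul] at this

theorem Matrix.conjTranspose_map_ofReal {m n : Type*} (A : Matrix m n ℝ) :
    (A.map Complex.ofReal)ᴴ = Aᵀ.map Complex.ofReal := by
  rw [← conjTranspose_eq_transpose_of_trivial,
    conjTranspose_map _ fun x => (Complex.conj_ofReal x).symm]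

theorem Matrix.posSemidef_map_ofReal_mul_mul_add_one_sub_mul_sub_I_smul {m : Type*} [Fintype m]
    [DecidableEq m] {P S Y J : Matrix m m ℝ} (hP : Pᵀ = P) (hPS : (P * S)ᵀ = P * S)
    (hPSP : P * S * P = P) (hSP : Commute S P) (hJP : Commute J P) (hJS : Commute J S)
    (hY : (Y.map Complex.ofReal - Complex.I • (S * J * S).map Complex.ofReal).PosSemidef)
    (hJ : (1 - Complex.I • J.map Complex.ofReal).PosSemidef) :
    ((P * Y * P + (1 - P * S)).map Complex.ofReal -
      Complex.I • J.map Complex.ofReal).PosSemidef := by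
  let φ := (Complex.ofRealHom).mapMatrix (m := m)
  change (φ (P * Y * P + (1 - P * S)) - Complex.I • φ J).PosSemidef
  change (φ Y - Complex.I • φ (S * J * S)).PosSemidef at hY
  have hφ (A : Matrix m m ℝ) : (φ A)ᴴ = φ Aᵀ := Matrix.conjTranspose_map_ofReal A
  simp only [map_add, map_sub, map_mul, map_one]
  refine posSemidef_mul_mul_add_one_sub_mul_sub ?_ ?_ ?_ (hSP.map φ)
    ((hJP.map φ).smul_left _) ((hJS.map φ).smul_left _) ?_ hJ
  · rw [hφ, hP]
  · rw [← map_mul, hφ, hPS]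
  · rw [← map_mul, ← map_mul, hPSP]
  · simpa only [map_mul, smul_mul_assoc, mul_smul_comm, Matrix.mul_assoc] using hY

theorem posSemidef_one_sub_I_smul_symJ (k : ℕ) :
    (1 - Complex.I • (symJ k).map Complex.ofReal).PosSemidef := by
  let φ := (Complex.ofRealHom).mapMatrix (m := Fin k ⊕ Fin k)
  change (1 - Complex.I • φ (symJ k)).PosSemidef
  apply Matrix.posSemidef_one_sub_of_mul_self_eq_one
  · have hφ : (φ (symJ k))ᴴ = φ (symJ k)ᵀ := Matrix.conjTranspose_map_ofReal _
    rw [conjTranspose_smul, hφ, symJ_transpose, map_neg, Complex.star_def, Complex.conj_I,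
      neg_smul, smul_neg, neg_neg]
  · rw [smul_mul_smul_comm, Complex.I_mul_I, ← map_mul, symJ_mul_self, map_neg, map_one,
      neg_smul, one_smul, neg_neg]

theorem dilation_construction (n : ℕ)
    (X Y : Matrix (Fin n ⊕ Fin n) (Fin n ⊕ Fin n) ℝ)
    (hYsym : Yᵀ = Y)
    (hpsd : Matrix.PosSemidef (1 - X * Xᵀ))
    (hcomm : X * symJ n = symJ n * X)
    (hker : LinearMap.ker Y.mulVecLin = LinearMap.ker (1 - X * Xᵀ).mulVecLin)
    (hY : Matrix.PosSemidef
      (Y.map Complex.ofReal -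
        (Complex.I • (symJ n).map Complex.ofReal -
          Complex.I • (X * symJ n * Xᵀ).map Complex.ofReal)))
    (s₂ : Matrix (Fin n ⊕ Fin n) (Fin n ⊕ Fin n) ℝ)
    (hs₂ : s₂ = hpsd.sqrt)
    -- `p` is the Moore–Penrose pseudoinverse of `s₂`, characterized by the
    -- four Penrose conditions:
    (p : Matrix (Fin n ⊕ Fin n) (Fin n ⊕ Fin n) ℝ)
    (hp1 : s₂ * p * s₂ = s₂) (hp2 : p * s₂ * p = p)
    (hp3 : (s₂ * p)ᵀ = s₂ * p) (hp4 : (p * s₂)ᵀ = p * s₂)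
    -- `1 - p * s₂` is the orthogonal projection onto `ker s₂`:
    (γE : Matrix (Fin n ⊕ Fin n) (Fin n ⊕ Fin n) ℝ)
    (hγE : γE = p * Y * pᵀ + (1 - p * s₂)) :
    s₂ * s₂ᵀ = 1 - X * Xᵀ ∧
      s₂ * symJ n * s₂ᵀ = symJ n - X * symJ n * Xᵀ ∧
      s₂ * γE * s₂ᵀ = Y ∧
      Matrix.PosSemidef
        (γE.map Complex.ofReal - Complex.I • (symJ n).map Complex.ofReal) := by
  have hs₂t : s₂ᵀ = s₂ := hs₂ ▸ hpsd.transpose_sqrt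
  have hss : s₂ * s₂ = 1 - X * Xᵀ := hs₂ ▸ hpsd.sqrt_mul_self
  have hJs : Commute (symJ n) s₂ :=
    hs₂ ▸ (hpsd.commute_sqrt (commute_symJ_one_sub_mul_transpose hcomm.symm).symm).symm
  have hp : s₂.IsMoorePenroseInverse p := ⟨hp1, hp2, hp3, hp4⟩
  have hpt : pᵀ = p := hp.transpose_eq_self hs₂t
  have hsp : Commute s₂ p := hp.commute_of_transpose_eq_self hs₂t
  have hJp : Commute (symJ n) p := hp.commute_of_commute (symJ_transpose_mul_self n) hJs
  have hSJS : s₂ * symJ n * s₂ = symJ n - X * symJ n * Xᵀ := by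
    rw [← hJs.eq, Matrix.mul_assoc, hss, Matrix.mul_sub, Matrix.mul_one, ← Matrix.mul_assoc,
      hcomm]
  have hYQ : Y * (p * s₂) = Y := hp.mul_inv_mul_of_ker_le <| by
    rw [hker, ← hss, Matrix.mulVecLin_mul]; exact LinearMap.ker_le_ker_comp _ _
  have hQY : p * s₂ * Y = Y := by
    simpa only [Matrix.transpose_mul, hYsym, hp4] using congrArg Matrix.transpose hYQ
  subst hγE
  rw [hpt, hs₂t]
  refine ⟨hss, hSJS, ?_, ?_⟩
  · calc s₂ * (p * Y * p + (1 - p * s₂)) * s₂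
        = s₂ * p * Y * (p * s₂) + s₂ * (1 - p * s₂) * s₂ := by noncomm_ring
      _ = Y := by rw [hsp.eq, hQY, hYQ, hp.mul_one_sub_inv_mul, Matrix.zero_mul, add_zero]
  · refine posSemidef_map_ofReal_mul_mul_add_one_sub_mul_sub_I_smul hpt hp4 hp2 hsp hJp hJs
      ?_ (posSemidef_one_sub_I_smul_symJ n)
    rwa [← smul_sub, ← Matrix.map_sub _ fun _ _ => Complex.ofReal_sub _ _, ← hSJS] at hY
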